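/- On ℝ⁸ with canonical coordinates (S₁,P₁,...,S₄,P₄), define the ten functions Δ(q₁²)=S₁²+S₃², Δ(q₁π₁)=S₁P₁+S₃P₃, Δ(π₁²)=P₁²+P₃², Δ(q₂²)=S₂²+S₄², Δ(q₂π₂)=S₂P₂+S₄P₄, Δ(π₂²)=P₂²+P₄², Δ(q₁q₂)=S₁S₂+S₃S₄, Δ(q₁π₂)=S₁P₂+S₃P₄, Δ(q₂π₁)=S₂P₁+S₄P₃, Δ(π₁π₂)=P₁P₂+P₃P₄. These satisfy all the Poisson-bracket relations of the second-order moment algebra for two degrees of freedom, e.g. {Δ(q₁²),Δ(q₁π₁)}=2Δ(q₁²), {Δ(q₁²),Δ(π₁²)}=4Δ(q₁π₁), {Δ(q₁²),Δ(π₁π₂)}=2Δ(q₁π₂), {Δ(π₁²),Δ(π₂²)}=0, {Δ(q₁π₂),Δ(q₂π₁)}=Δ(q₂π₂)-Δ(q₁π₁), and {Δ(q₁q₂),Δ(π₁π₂)}=Δ(q₁π₁)+Δ(q₂π₂). -/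
import Mathlib


/-- Partial derivative with respect to `S_i` of a function on ℝ⁸ with coordinates
`(S, P) : (Fin 4 → ℝ) × (Fin 4 → ℝ)`. -/
noncomputable def pds (F : (Fin 4 → ℝ) → (Fin 4 → ℝ) → ℝ) (i : Fin 4)
    (S P : Fin 4 → ℝ) : ℝ :=
  deriv (fun x => F (Function.update S i x) P) (S i)

/-- Partial derivative with respect to `P_i`. -/
noncomputable def pdp (F : (Fin 4 → ℝ) → (Fin 4 → ℝ) → ℝ) (i : Fin 4)
    (S P : Fin 4 → ℝ) : ℝ :=
  deriv (fun y => F S (Function.update P i y)) (P i)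

/-- Canonical Poisson bracket on ℝ⁸:
`{F,G} = ∑_i (∂F/∂S_i ∂G/∂P_i - ∂F/∂P_i ∂G/∂S_i)`. -/
noncomputable def pb (F G : (Fin 4 → ℝ) → (Fin 4 → ℝ) → ℝ) (S P : Fin 4 → ℝ) : ℝ :=
  ∑ i : Fin 4, (pds F i S P * pdp G i S P - pdp F i S P * pds G i S P)

private lemma d1 (c t : ℝ) : deriv (fun x : ℝ => x ^ 2 + c) t = 2 * t := by
  simp [deriv_add, differentiable_id]
private lemma d2 (c t : ℝ) : deriv (fun x : ℝ => c + x ^ 2) t = 2 * t := by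
  simp [deriv_add, differentiable_id]
private lemma d3 (a b t : ℝ) : deriv (fun x : ℝ => x * a + b) t = a := by
  simp
private lemma d4 (a b t : ℝ) : deriv (fun x : ℝ => b + x * a) t = a := by
  simp
private lemma d5 (a b t : ℝ) : deriv (fun x : ℝ => a * x + b) t = a := by
  simpa [mul_comm] using d3 a b t
private lemma d6 (a b t : ℝ) : deriv (fun x : ℝ => b + a * x) t = a := by
  simpa [mul_comm] using d4 a b t

set_option maxHeartbeats 2000000 in
/-- The ten quadratic functions on ℝ⁸ realize the Poisson-bracket relations of the
second-order moment algebra for two degrees of freedom. -/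
theorem moment_realization_two_dof :
    let Dq1q1 : (Fin 4 → ℝ) → (Fin 4 → ℝ) → ℝ := fun S _ => S 0 ^ 2 + S 2 ^ 2
    let Dq1p1 : (Fin 4 → ℝ) → (Fin 4 → ℝ) → ℝ := fun S P => S 0 * P 0 + S 2 * P 2
    let Dp1p1 : (Fin 4 → ℝ) → (Fin 4 → ℝ) → ℝ := fun _ P => P 0 ^ 2 + P 2 ^ 2
    let Dq2q2 : (Fin 4 → ℝ) → (Fin 4 → ℝ) → ℝ := fun S _ => S 1 ^ 2 + S 3 ^ 2
    let Dq2p2 : (Fin 4 → ℝ) → (Fin 4 → ℝ) → ℝ := fun S P => S 1 * P 1 + S 3 * P 3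
    let Dp2p2 : (Fin 4 → ℝ) → (Fin 4 → ℝ) → ℝ := fun _ P => P 1 ^ 2 + P 3 ^ 2
    let Dq1q2 : (Fin 4 → ℝ) → (Fin 4 → ℝ) → ℝ := fun S _ => S 0 * S 1 + S 2 * S 3
    let Dq1p2 : (Fin 4 → ℝ) → (Fin 4 → ℝ) → ℝ := fun S P => S 0 * P 1 + S 2 * P 3
    let Dq2p1 : (Fin 4 → ℝ) → (Fin 4 → ℝ) → ℝ := fun S P => S 1 * P 0 + S 3 * P 2
    let Dp1p2 : (Fin 4 → ℝ) → (Fin 4 → ℝ) → ℝ := fun _ P => P 0 * P 1 + P 2 * P 3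
    ∀ S P : Fin 4 → ℝ,
      pb Dq1q1 Dq1p1 S P = 2 * Dq1q1 S P ∧
      pb Dq1q1 Dp1p1 S P = 4 * Dq1p1 S P ∧
      pb Dq1q1 Dp1p2 S P = 2 * Dq1p2 S P ∧
      pb Dp1p1 Dp2p2 S P = 0 ∧
      pb Dq1p2 Dq2p1 S P = Dq2p2 S P - Dq1p1 S P ∧
      pb Dq1q2 Dp1p2 S P = Dq1p1 S P + Dq2p2 S P := by
  intro Dq1q1 Dq1p1 Dp1p1 Dq2q2 Dq2p2 Dp2p2 Dq1q2 Dq1p2 Dq2p1 Dp1p2 S P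
  refine ⟨?_, ?_, ?_, ?_, ?_, ?_⟩ <;>
    simp only [pb, pds, pdp, Fin.sum_univ_four, Function.update_apply,
      Dq1q1, Dq1p1, Dp1p1, Dq2q2, Dq2p2, Dp2p2, Dq1q2, Dq1p2, Dq2p1, Dp1p2] <;>
    simp [d1, d2, d3, d4, d5, d6] <;> ring
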